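/- arXiv:1808.10749 — 2 statements merged into one kernel-verified Lean document; each statement's English description precedes it below -/
import Mathlib

section
/- Let X and Y be compact Hausdorff spaces and let h_0, h_1 : X → Y be continuous maps that are homotopic. Then the induced maps I_f(h_0), I_f(h_1) : I_f(X) → I_f(Y) are homotopic; explicitly, if h : X × [0,1] → Y is a homotopy with h(·,0) = h_0 and h(·,1) = h_1, then the map H : I_f(X) × [0,1] → I_f(Y) defined by H(⊕_{i=1}^n λ_i ⊙ δ_{x_i}, t) = ⊕_{i=1}^n λ_i ⊙ δ_{h(x_i,t)} is a continuous homotopy between I_f(h_0) and I_f(h_1). -/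
open Real Set Topology

/-- The Dirac measure `δ_x` on `X`, as a functional on `C(X, ℝ)`: `δ_x(φ) = φ(x)`. -/
def dirac (X : Type*) [TopologicalSpace X] (x : X) : C(X, ℝ) → ℝ := fun φ => φ x

/-- The max-plus combination `⊕_{i=1}^n λ_i ⊙ δ_{x_i}`, i.e. the functional
`φ ↦ max_{1 ≤ i ≤ n} (λ_i + φ(x_i))`. -/
noncomputable def maxPlus {X : Type*} [TopologicalSpace X] {n : ℕ}
    (lam : Fin n → ℝ) (x : Fin n → X) : C(X, ℝ) → ℝ :=
  fun φ => ⨆ i, (lam i + φ (x i))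

/-- `μ : C(X, ℝ) → ℝ` is an idempotent probability measure:
(1) `μ(c_λ) = λ` for constant functions; (2) `μ(λ + φ) = λ + μ(φ)`;
(3) `μ(max(φ, ψ)) = max(μ(φ), μ(ψ))`. -/
def IsIPM {X : Type*} [TopologicalSpace X] (μ : C(X, ℝ) → ℝ) : Prop :=
  (∀ c : ℝ, μ (ContinuousMap.const X c) = c) ∧
  (∀ (c : ℝ) (φ : C(X, ℝ)), μ (ContinuousMap.const X c + φ) = c + μ φ) ∧
  (∀ φ ψ : C(X, ℝ), μ (φ ⊔ ψ) = max (μ φ) (μ ψ))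

/-- Membership in `I_ω(X)`: idempotent probability measures with finite support, i.e.
`μ = ⊕_{i=1}^n λ_i ⊙ δ_{x_i}` with `x_i` pairwise distinct, `λ_i ≤ 0` and `max_i λ_i = 0`. -/
def IsFS {X : Type*} [TopologicalSpace X] (μ : C(X, ℝ) → ℝ) : Prop :=
  ∃ n : ℕ, 0 < n ∧ ∃ (x : Fin n → X) (lam : Fin n → ℝ),
    Function.Injective x ∧ (∀ i, lam i ≤ 0) ∧ (∃ i, lam i = 0) ∧ μ = maxPlus lam x

/-- Membership in `I_f(X)`: `μ = ⊕_{i=1}^n λ_i ⊙ δ_{x_i}` with `x_i` pairwise distinct,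
a unique index `i₀` with `λ_{i₀} = 0`, and `λ_i ≤ -ln(n+1)` for every `i ≠ i₀`. -/
def IsIf {X : Type*} [TopologicalSpace X] (μ : C(X, ℝ) → ℝ) : Prop :=
  ∃ n : ℕ, 0 < n ∧ ∃ (x : Fin n → X) (lam : Fin n → ℝ) (i0 : Fin n),
    Function.Injective x ∧ lam i0 = 0 ∧
    (∀ i, i ≠ i0 → lam i ≤ -Real.log (n + 1)) ∧ μ = maxPlus lam x

/-- The pushforward `I_f(f)(μ)(ψ) = μ(ψ ∘ f)`. -/
def push {X Y : Type*} [TopologicalSpace X] [TopologicalSpace Y]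
    (f : C(X, Y)) (μ : C(X, ℝ) → ℝ) : C(Y, ℝ) → ℝ :=
  fun ψ => μ (ψ.comp f)

/-! A finite max-plus combination `φ ↦ max_i (λ_i + φ(x_i))` is 1-Lipschitz for the sup metric
on `C(X)`. For compact `X` the path `t ↦ ψ ∘ h(·, t)` is continuous in that metric, and
equi-Lipschitz functionals evaluated along a continuous path depend jointly continuously on the
functional (pointwise topology) and the time. That `H(μ, t) = I_f(h(·, t))(μ)` stays in `I_f(Y)`
comes from merging the points with equal images under `h(·, t)`: a merged point carries the
largest of the merged weights, and the bound `-ln(n+1)` only weakens as the number `n` of points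
drops. -/

open Function

theorem continuous_subtype_apply_of_lipschitzWith {E F T : Type*} [PseudoMetricSpace E]
    [PseudoMetricSpace F] [TopologicalSpace T] {P : (E → F) → Prop}
    (hP : ∀ μ, P μ → LipschitzWith 1 μ) {φ : T → E} (hφ : Continuous φ) :
    Continuous fun p : {μ // P μ} × T => p.1.1 (φ p.2) := by
  refine continuous_iff_continuousAt.2 fun ⟨μ₀, t₀⟩ => ?_
  rw [ContinuousAt, tendsto_iff_dist_tendsto_zero]
  have hbound : ∀ p : {μ // P μ} × T, dist (p.1.1 (φ p.2)) (μ₀.1 (φ t₀)) ≤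
      dist (φ p.2) (φ t₀) + dist (p.1.1 (φ t₀)) (μ₀.1 (φ t₀)) := fun p =>
    (dist_triangle _ _ _).trans <| add_le_add_left (by simpa using (hP _ p.1.2).dist_le_mul _ _) _
  have hcont : Continuous fun p : {μ // P μ} × T =>
      dist (φ p.2) (φ t₀) + dist (p.1.1 (φ t₀)) (μ₀.1 (φ t₀)) := by
    have hμ : Continuous fun p : {μ // P μ} × T => p.1.1 (φ t₀) :=
      (continuous_apply _).comp (continuous_subtype_val.comp continuous_fst)
    exact ((hφ.comp continuous_snd).dist continuous_const).add (hμ.dist continuous_const)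
  exact squeeze_zero (fun _ => dist_nonneg) hbound (hcont.tendsto' _ _ (by simp))

theorem exists_surjective_injective_comp_eq {Y : Type*} {n : ℕ} (y : Fin n → Y) :
    ∃ (m : ℕ) (g : Fin n → Fin m) (x : Fin m → Y), Surjective g ∧ Injective x ∧ x ∘ g = y := by
  classical
  let e := Fintype.equivFin (Set.range y)
  exact ⟨_, e ∘ Set.rangeFactorization y, Subtype.val ∘ e.symm,
    e.surjective.comp Set.rangeFactorization_surjective,
    Subtype.val_injective.comp e.symm.injective, by ext; simp [Set.rangeFactorization_coe]⟩

section MaxPlus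

variable {X Y : Type*} [TopologicalSpace X] [TopologicalSpace Y]

theorem lipschitzWith_maxPlus [CompactSpace X] {n : ℕ} (lam : Fin n → ℝ) (x : Fin n → X) :
    LipschitzWith 1 (maxPlus lam x) := by
  rcases isEmpty_or_nonempty (Fin n) with hn | hn
  · have : maxPlus lam x = fun _ => 0 := funext fun _ => Real.iSup_of_isEmpty _
    exact this ▸ LipschitzWith.const' 0
  refine LipschitzWith.of_le_add fun φ ψ => ciSup_le fun i => ?_
  have hφψ : φ (x i) - ψ (x i) ≤ dist φ ψ :=
    (le_abs_self _).trans <|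
      (Real.dist_eq _ _).symm.trans_le (ContinuousMap.dist_apply_le_dist (x i))
  calc lam i + φ (x i) ≤ lam i + ψ (x i) + dist φ ψ := by linarith
    _ ≤ maxPlus lam x ψ + dist φ ψ := by
      gcongr
      exact le_ciSup (f := fun i => lam i + ψ (x i)) (Set.finite_range _).bddAbove i

theorem push_maxPlus (f : C(X, Y)) {n : ℕ} (lam : Fin n → ℝ) (x : Fin n → X) :
    push f (maxPlus lam x) = maxPlus lam (f ∘ x) :=
  rfl

/-- The weight of `j` in the image of `⊕ λ_i ⊙ δ_{y_i}` under a map `g` of the indices. -/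
noncomputable def fiberSup {n m : ℕ} (g : Fin n → Fin m) (lam : Fin n → ℝ) (j : Fin m) : ℝ :=
  ⨆ i : {i // g i = j}, lam i

section FiberSup

variable {n m : ℕ} {g : Fin n → Fin m} (lam : Fin n → ℝ)

theorem le_fiberSup (i : Fin n) : lam i ≤ fiberSup g lam (g i) :=
  le_ciSup (f := fun k : {k // g k = g i} => lam k) (Set.finite_range _).bddAbove ⟨i, rfl⟩

theorem fiberSup_le (hg : Surjective g) {j : Fin m} {c : ℝ} (h : ∀ i, g i = j → lam i ≤ c) :
    fiberSup g lam j ≤ c :=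
  have : Nonempty {i // g i = j} := nonempty_subtype.2 (hg j)
  ciSup_le fun i => h i i.2

theorem exists_eq_fiberSup (hg : Surjective g) (j : Fin m) :
    ∃ i, g i = j ∧ lam i = fiberSup g lam j :=
  have : Nonempty {i // g i = j} := nonempty_subtype.2 (hg j)
  let ⟨i, hi⟩ := exists_eq_ciSup_of_finite (f := fun i : {i // g i = j} => lam i)
  ⟨i, i.2, hi⟩

theorem maxPlus_comp_eq_maxPlus_fiberSup (hg : Surjective g) (x : Fin m → X) :
    maxPlus lam (x ∘ g) = maxPlus (fiberSup g lam) x := by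
  funext φ
  rcases isEmpty_or_nonempty (Fin m) with hm | hm
  · have := g.isEmpty
    simp [maxPlus]
  have : Nonempty (Fin n) := hg.nonempty
  refine le_antisymm (ciSup_le fun i => ?_) (ciSup_le fun j => ?_)
  · calc lam i + φ (x (g i)) ≤ fiberSup g lam (g i) + φ (x (g i)) := by
          gcongr; exact le_fiberSup lam i
      _ ≤ maxPlus (fiberSup g lam) x φ :=
        le_ciSup (f := fun j => fiberSup g lam j + φ (x j)) (Set.finite_range _).bddAbove (g i)
  · obtain ⟨i, rfl, hi⟩ := exists_eq_fiberSup lam hg j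
    rw [← hi]
    exact le_ciSup (Set.finite_range (fun i => lam i + φ (x (g i)))).bddAbove i

end FiberSup

theorem isIf_maxPlus {n : ℕ} (y : Fin n → Y) {lam : Fin n → ℝ} {i₀ : Fin n} (h₀ : lam i₀ = 0)
    (hle : ∀ i, i ≠ i₀ → lam i ≤ -Real.log (n + 1)) :
    IsIf (maxPlus lam y) := by
  obtain ⟨m, g, x, hg, hx, rfl⟩ := exists_surjective_injective_comp_eq y
  have hmn : (m : ℝ) ≤ n := by exact_mod_cast Fin.le_of_surjective g hg
  have hnonpos : ∀ i, lam i ≤ 0 := fun i => by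
    rcases eq_or_ne i i₀ with rfl | hi
    · exact h₀.le
    · exact (hle i hi).trans (neg_nonpos.2 (Real.log_nonneg (le_add_of_nonneg_left n.cast_nonneg)))
  refine ⟨m, (g i₀).pos, x, fiberSup g lam, g i₀, hx, ?_, fun j hj => ?_,
    maxPlus_comp_eq_maxPlus_fiberSup lam hg x⟩
  · exact le_antisymm (fiberSup_le lam hg fun i _ => hnonpos i) (h₀ ▸ le_fiberSup lam i₀)
  · refine fiberSup_le lam hg fun i hi => (hle i ?_).trans ?_
    · exact fun hi₀ => hj (hi₀ ▸ hi).symm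
    · gcongr

theorem IsIf.push {μ : C(X, ℝ) → ℝ} (hμ : IsIf μ) (f : C(X, Y)) : IsIf (push f μ) := by
  obtain ⟨n, -, x, lam, i₀, -, h₀, hle, rfl⟩ := hμ
  exact push_maxPlus f lam x ▸ isIf_maxPlus (f ∘ x) h₀ hle

theorem IsIf.lipschitzWith [CompactSpace X] {μ : C(X, ℝ) → ℝ} (hμ : IsIf μ) :
    LipschitzWith 1 μ := by
  obtain ⟨n, -, x, lam, -, -, -, -, rfl⟩ := hμ
  exact lipschitzWith_maxPlus lam x

end MaxPlus

theorem stmt13_general {X Y : Type*} [TopologicalSpace X] [CompactSpace X]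
    [TopologicalSpace Y]
    (h0 h1 : C(X, Y)) (hh : ContinuousMap.Homotopy h0 h1) :
    ∃ H : {μ : C(X, ℝ) → ℝ // IsIf μ} → unitInterval → C(Y, ℝ) → ℝ,
      Continuous (fun p : {μ : C(X, ℝ) → ℝ // IsIf μ} × unitInterval => H p.1 p.2) ∧
      (∀ μ t, IsIf (H μ t)) ∧
      (∀ μ, H μ 0 = push h0 μ.1) ∧
      (∀ μ, H μ 1 = push h1 μ.1) ∧
      (∀ (n : ℕ), 0 < n → ∀ (x : Fin n → X) (lam : Fin n → ℝ),
        ∀ hμ : IsIf (maxPlus lam x), ∀ t : unitInterval,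
          H ⟨maxPlus lam x, hμ⟩ t = maxPlus lam (fun i => hh (t, x i))) := by
  refine ⟨fun μ t => push (hh.curry t) μ.1, ?_, fun μ t => μ.2.push _, fun μ => by simp,
    fun μ => by simp, fun n _ x lam _ t => rfl⟩
  exact continuous_pi fun ψ => continuous_subtype_apply_of_lipschitzWith
    (fun _ hμ => hμ.lipschitzWith) ((ContinuousMap.continuous_postcomp ψ).comp hh.curry.continuous)

/-- if `h₀, h₁ : X → Y` are homotopic continuous maps, with homotopy `hh`,
then `I_f(h₀)` and `I_f(h₁)` are homotopic; explicitly, the map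
`H(⊕_{i=1}^n λ_i ⊙ δ_{x_i}, t) = ⊕_{i=1}^n λ_i ⊙ δ_{hh(x_i,t)}` is a continuous homotopy
from `I_f(h₀)` to `I_f(h₁)` through `I_f(Y)`. -/
theorem stmt13 {X Y : Type*} [TopologicalSpace X] [CompactSpace X] [T2Space X]
    [TopologicalSpace Y] [CompactSpace Y] [T2Space Y]
    (h0 h1 : C(X, Y)) (hh : ContinuousMap.Homotopy h0 h1) :
    ∃ H : {μ : C(X, ℝ) → ℝ // IsIf μ} → unitInterval → C(Y, ℝ) → ℝ,
      Continuous (fun p : {μ : C(X, ℝ) → ℝ // IsIf μ} × unitInterval => H p.1 p.2) ∧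
      (∀ μ t, IsIf (H μ t)) ∧
      (∀ μ, H μ 0 = push h0 μ.1) ∧
      (∀ μ, H μ 1 = push h1 μ.1) ∧
      (∀ (n : ℕ), 0 < n → ∀ (x : Fin n → X) (lam : Fin n → ℝ),
        ∀ hμ : IsIf (maxPlus lam x), ∀ t : unitInterval,
          H ⟨maxPlus lam x, hμ⟩ t = maxPlus lam (fun i => hh (t, x i))) :=
  stmt13_general h0 h1 hh
end

section
/- Let X be a compact Hausdorff space that is contractible (the identity map of X is homotopic to a constant map). Then I_f(X) is contractible: the identity map of I_f(X) is homotopic to a constant map. -/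
open Real Set Topology

/-!
A homotopy `H` on `X` pushes measures forward: `μ ↦ μ ∘ (· ∘ H_t)` sends
`⊕ λ_i ⊙ δ_{x_i}` to `⊕ λ_i ⊙ δ_{H_t x_i}`. When two of the points `H_t x_i` collide, the
one of smaller weight can be dropped without changing the functional, and with fewer points the
bound `λ_i ≤ -ln(n+1)` only gets weaker, so `I_f` is preserved. Every measure in `I_f(X)` is
`1`-Lipschitz for the sup norm, which makes the pushforward jointly continuous in `(t, μ)`.
A contraction of `X` onto `x₀` thus becomes a contraction of `I_f(X)` onto `δ_{x₀}`.
-/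

open Real ContinuousMap

local notation "I_f(" X ")" => {μ : C(X, ℝ) → ℝ // IsIf μ}

lemma nonpos_of_le_neg_log {n : ℕ} {lam : Fin n → ℝ} {i0 : Fin n} (h0 : lam i0 = 0)
    (hlam : ∀ i, i ≠ i0 → lam i ≤ -log (n + 1)) (i : Fin n) : lam i ≤ 0 := by
  rcases eq_or_ne i i0 with rfl | hi
  · exact h0.le
  · linarith [hlam i hi, log_nonneg (le_add_of_nonneg_left n.cast_nonneg : (1 : ℝ) ≤ n + 1)]

lemma exists_droppable_index {α : Type*} {n : ℕ} {lam : Fin n → ℝ} {y : Fin n → α} {i0 : Fin n}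
    (h0 : lam i0 = 0) (hlam : ∀ i, lam i ≤ 0) (hy : ¬ Function.Injective y) :
    ∃ k k', k ≠ i0 ∧ k' ≠ k ∧ y k = y k' ∧ lam k ≤ lam k' := by
  obtain ⟨a, b, hyab, hab⟩ := Function.not_injective_iff.mp hy
  rcases eq_or_ne a i0 with rfl | ha
  · exact ⟨b, a, Ne.symm hab, hab, hyab.symm, h0 ▸ hlam b⟩
  rcases eq_or_ne b i0 with rfl | hb
  · exact ⟨a, b, ha, hab.symm, hyab, h0 ▸ hlam a⟩
  rcases le_total (lam a) (lam b) with h | h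
  · exact ⟨a, b, ha, hab.symm, hyab, h⟩
  · exact ⟨b, a, hb, hab, hyab.symm, h⟩

section MaxPlus

variable {X : Type*} [TopologicalSpace X] {n : ℕ}

lemma le_maxPlus (lam : Fin n → ℝ) (x : Fin n → X) (φ : C(X, ℝ)) (i : Fin n) :
    lam i + φ (x i) ≤ maxPlus lam x φ :=
  le_ciSup (f := fun i => lam i + φ (x i)) (Set.finite_range _).bddAbove i

lemma maxPlus_le [Nonempty (Fin n)] {lam : Fin n → ℝ} {x : Fin n → X} {φ : C(X, ℝ)} {c : ℝ}
    (h : ∀ i, lam i + φ (x i) ≤ c) : maxPlus lam x φ ≤ c :=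
  ciSup_le h

lemma maxPlus_eq_maxPlus_succAbove (lam : Fin (n + 1) → ℝ) (y : Fin (n + 1) → X)
    {k k' : Fin (n + 1)} (hkk' : k' ≠ k) (hy : y k = y k') (hlam : lam k ≤ lam k') :
    maxPlus lam y = maxPlus (lam ∘ k.succAbove) (y ∘ k.succAbove) := by
  obtain ⟨j', rfl⟩ := Fin.exists_succAbove_eq hkk'
  have : Nonempty (Fin n) := ⟨j'⟩
  funext φ
  apply le_antisymm
  · refine maxPlus_le fun i => ?_
    rcases eq_or_ne i k with rfl | hik
    · calc lam i + φ (y i) ≤ lam (i.succAbove j') + φ (y (i.succAbove j')) := by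
            rw [hy]; linarith
        _ ≤ _ := le_maxPlus (lam ∘ i.succAbove) (y ∘ i.succAbove) φ j'
    · obtain ⟨j, rfl⟩ := Fin.exists_succAbove_eq hik
      exact le_maxPlus (lam ∘ k.succAbove) (y ∘ k.succAbove) φ j
  · exact maxPlus_le fun j => le_maxPlus lam y φ (k.succAbove j)

lemma maxPlus_const_apply (lam : Fin n → ℝ) (x : Fin n → X) {i0 : Fin n} (h0 : lam i0 = 0)
    (hlam : ∀ i, lam i ≤ 0) (c : ℝ) : maxPlus lam x (const X c) = c := by
  have : Nonempty (Fin n) := ⟨i0⟩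
  refine le_antisymm (maxPlus_le fun i => by simpa using hlam i) ?_
  simpa [h0] using le_maxPlus lam x (const X c) i0

end MaxPlus

section IsIf

variable {X Y : Type*} [TopologicalSpace X] [TopologicalSpace Y]

lemma isIf_maxPlus_s14 {n : ℕ} (lam : Fin n → ℝ) (y : Fin n → X) (i0 : Fin n) (h0 : lam i0 = 0)
    (hlam : ∀ i, i ≠ i0 → lam i ≤ -log (n + 1)) : IsIf (maxPlus lam y) := by
  induction n with
  | zero => exact i0.elim0
  | succ n ih =>
    by_cases hy : Function.Injective y
    · exact ⟨n + 1, n.succ_pos, y, lam, i0, hy, h0, hlam, rfl⟩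
    obtain ⟨k, k', hki0, hkk', hyk, hlk⟩ :=
      exists_droppable_index h0 (nonpos_of_le_neg_log h0 hlam) hy
    obtain ⟨j0, rfl⟩ := Fin.exists_succAbove_eq hki0.symm
    rw [maxPlus_eq_maxPlus_succAbove lam y hkk' hyk hlk]
    refine ih _ _ j0 h0 fun j hj => (hlam _ (k.succAbove_right_injective.ne hj)).trans ?_
    have : log ((n : ℝ) + 1) ≤ log ((n : ℝ) + 1 + 1) :=
      log_le_log (by positivity) (by linarith)
    push_cast
    linarith

lemma isIf_dirac (x : X) : IsIf (dirac X x) := by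
  have : dirac X x = maxPlus (fun _ : Fin 1 => (0 : ℝ)) fun _ => x := by
    funext φ
    simp [dirac, maxPlus]
  exact this ▸ isIf_maxPlus_s14 _ _ 0 rfl fun i hi => absurd (Subsingleton.elim i 0) hi

namespace IsIf

variable {μ : C(X, ℝ) → ℝ}

lemma comp (hμ : IsIf μ) (f : C(X, Y)) : IsIf fun φ : C(Y, ℝ) => μ (φ.comp f) := by
  obtain ⟨n, -, x, lam, i0, -, h0, hlam, rfl⟩ := hμ
  exact isIf_maxPlus_s14 lam (f ∘ x) i0 h0 hlam

lemma apply_const (hμ : IsIf μ) (c : ℝ) : μ (const X c) = c := by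
  obtain ⟨n, -, x, lam, i0, -, h0, hlam, rfl⟩ := hμ
  exact maxPlus_const_apply lam x h0 (nonpos_of_le_neg_log h0 hlam) c

lemma lipschitzWith_s14 [CompactSpace X] (hμ : IsIf μ) : LipschitzWith 1 μ := by
  obtain ⟨n, hn, x, lam, i0, -, -, -, rfl⟩ := hμ
  have : Nonempty (Fin n) := Fin.pos_iff_nonempty.mp hn
  refine LipschitzWith.of_le_add fun φ ψ => maxPlus_le fun i => ?_
  have : φ (x i) ≤ ψ (x i) + dist φ ψ := by
    linarith [le_abs_self (φ (x i) - ψ (x i)), dist_apply_le_dist (f := φ) (g := ψ) (x i),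
      Real.dist_eq (φ (x i)) (ψ (x i))]
  linarith [le_maxPlus lam x ψ i]

end IsIf

lemma continuous_eval_isIf [CompactSpace X] : Continuous fun p : C(X, ℝ) × I_f(X) => p.2.1 p.1 :=
  continuous_prod_of_continuous_lipschitzWith _ 1
    (fun φ => (continuous_apply φ).comp continuous_subtype_val) fun μ => μ.2.lipschitzWith_s14

def mapIf (f : C(X, Y)) : C(I_f(X), I_f(Y)) where
  toFun μ := ⟨fun φ => μ.1 (φ.comp f), μ.2.comp f⟩
  continuous_toFun :=
    (continuous_pi fun φ => (continuous_apply (φ.comp f)).comp continuous_subtype_val).subtype_mk _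

lemma mapIf_id : mapIf (ContinuousMap.id X) = ContinuousMap.id I_f(X) :=
  rfl

lemma mapIf_const (y : Y) : mapIf (const X y) = const I_f(X) ⟨dirac Y y, isIf_dirac y⟩ := by
  ext μ φ
  exact μ.2.apply_const (φ y)

def ContinuousMap.Homotopy.mapIf [CompactSpace X] {f₀ f₁ : C(X, Y)} (H : f₀.Homotopy f₁) :
    (mapIf f₀).Homotopy (mapIf f₁) where
  toFun p := _root_.mapIf (H.curry p.1) p.2
  continuous_toFun := by
    refine (continuous_pi fun φ => ?_).subtype_mk _
    exact continuous_eval_isIf.comp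
      (((continuous_postcomp φ).comp (H.curry.continuous.comp continuous_fst)).prodMk
        continuous_snd)
  map_zero_left μ := by simp
  map_one_left μ := by simp

end IsIf

theorem stmt14_general {X : Type*} [TopologicalSpace X] [CompactSpace X]
    (hX : ∃ x0 : X, Nonempty (ContinuousMap.Homotopy (ContinuousMap.id X)
      (ContinuousMap.const X x0))) :
    ∃ μ0 : {μ : C(X, ℝ) → ℝ // IsIf μ},
      Nonempty (ContinuousMap.Homotopy (ContinuousMap.id {μ : C(X, ℝ) → ℝ // IsIf μ})
        (ContinuousMap.const {μ : C(X, ℝ) → ℝ // IsIf μ} μ0)) := by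
  obtain ⟨x0, ⟨H⟩⟩ := hX
  exact ⟨⟨dirac X x0, isIf_dirac x0⟩, ⟨H.mapIf.cast mapIf_id (mapIf_const x0)⟩⟩

/-- if the compact Hausdorff space `X` is contractible (the identity map of
`X` is homotopic to a constant map), then `I_f(X)` is contractible: the identity map of
`I_f(X)` is homotopic to a constant map. -/
theorem stmt14 {X : Type*} [TopologicalSpace X] [CompactSpace X] [T2Space X]
    (hX : ∃ x0 : X, Nonempty (ContinuousMap.Homotopy (ContinuousMap.id X)
      (ContinuousMap.const X x0))) :
    ∃ μ0 : {μ : C(X, ℝ) → ℝ // IsIf μ},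
      Nonempty (ContinuousMap.Homotopy (ContinuousMap.id {μ : C(X, ℝ) → ℝ // IsIf μ})
        (ContinuousMap.const {μ : C(X, ℝ) → ℝ // IsIf μ} μ0)) :=
  stmt14_general hX
end
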